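/- Let G be a finite graph (with a loop at every vertex) having no universal vertices and no true twins. Suppose there exists a set X of vertices such that (i) each vertex not in X is circularly-paired with a vertex in X, and (ii) the induced subgraph G[X] admits a circular-arc representation which is normalized with respect to G. Then G is a circular-arc graph. -/

import Mathlib

/-!
Graphs here are finite, undirected, without parallel edges, and have a loop at
every vertex.  We model them as symmetric reflexive relations.
-/

structure LoopGraph (V : Type) where
  Adj : V → V → Prop
  symm : ∀ u v, Adj u v → Adj v u
  refl : ∀ u, Adj u u

namespace LoopGraph

variable {V W : Type}

/-- Closed neighbourhood `N[u]`. -/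
def nbhd (G : LoopGraph V) (u : V) : Set V := {v | G.Adj u v}

/-- `u` is a universal vertex. -/
def Universal (G : LoopGraph V) (u : V) : Prop := ∀ v, G.Adj u v

/-- `u ≠ v` are true twins if `N[u] = N[v]`. -/
def TrueTwins (G : LoopGraph V) (u v : V) : Prop := u ≠ v ∧ G.nbhd u = G.nbhd v

/-- `uv` is an inclusion edge: it is an edge and `N[u] ⊆ N[v]` or `N[v] ⊆ N[u]`. -/
def InclusionEdge (G : LoopGraph V) (u v : V) : Prop :=
  G.Adj u v ∧ (G.nbhd u ⊆ G.nbhd v ∨ G.nbhd v ⊆ G.nbhd u)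

/-- `u` overlaps `v`: they are adjacent and their closed neighbourhoods are incomparable. -/
def Overlaps (G : LoopGraph V) (u v : V) : Prop :=
  G.Adj u v ∧ ¬ G.nbhd u ⊆ G.nbhd v ∧ ¬ G.nbhd v ⊆ G.nbhd u

/-- `{u,v}` is a spanning pair. -/
def SpanningPair (G : LoopGraph V) (u v : V) : Prop :=
  (∀ x, ¬ G.Adj v x → G.nbhd x ⊆ G.nbhd u) ∧
  (∀ y, ¬ G.Adj u y → G.nbhd y ⊆ G.nbhd v)

/-- `uv` is a 2-overlap edge: an overlap edge forming a spanning pair. -/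
def TwoOverlapEdge (G : LoopGraph V) (u v : V) : Prop :=
  G.Overlaps u v ∧ G.SpanningPair u v

/-- `uv` is a 1-overlap edge: an overlap edge not forming a spanning pair. -/
def OneOverlapEdge (G : LoopGraph V) (u v : V) : Prop :=
  G.Overlaps u v ∧ ¬ G.SpanningPair u v

/-- `{u,v}` is a circular pair: a non-adjacent spanning pair. -/
def CircularPair (G : LoopGraph V) (u v : V) : Prop :=
  G.SpanningPair u v ∧ ¬ G.Adj u v

/-- Every vertex belongs to some circular pair. -/
def CircularlyPaired (G : LoopGraph V) : Prop := ∀ u, ∃ v, G.CircularPair u v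

/-- A walk with `k` edges: vertices `P 0, …, P k` with consecutive vertices adjacent. -/
def IsWalk (G : LoopGraph V) (k : ℕ) (P : ℕ → V) : Prop :=
  ∀ i < k, G.Adj (P i) (P (i + 1))

/-- Vertex `z` avoids the edge `ab`: every neighbour of `z` among `a, b` overlaps `z`,
and if `z` overlaps both `a` and `b` then `a, b` do not overlap each other. -/
def AvoidsEdge (G : LoopGraph V) (z a b : V) : Prop :=
  (G.Adj z a → G.Overlaps z a) ∧ (G.Adj z b → G.Overlaps z b) ∧
  (G.Overlaps z a → G.Overlaps z b → ¬ G.Overlaps a b)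

/-- Vertex `z` and the walk `P` (with `k` edges) avoid each other. -/
def AvoidsWalk (G : LoopGraph V) (z : V) (k : ℕ) (P : ℕ → V) : Prop :=
  (∀ i ≤ k, G.Adj z (P i) → G.Overlaps z (P i)) ∧
  (∀ i < k, G.Overlaps z (P i) → G.Overlaps z (P (i + 1)) →
    ¬ G.Overlaps (P i) (P (i + 1)))

/-- The walks `P` and `Q` (both with `k` edges) avoid each other. -/
def WalksAvoid (G : LoopGraph V) (k : ℕ) (P Q : ℕ → V) : Prop :=
  ∀ i < k, G.AvoidsEdge (P i) (Q i) (Q (i + 1)) ∧ G.AvoidsEdge (Q (i + 1)) (P i) (P (i + 1))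

/-- `{x,y}` is a `z`-invertible pair, i.e. an invertible pair anchored at `z`. -/
def ZInvertiblePair (G : LoopGraph V) (z x y : V) : Prop :=
  x ≠ y ∧ x ≠ z ∧ y ≠ z ∧
  ∃ k, ∃ P Q : ℕ → V, G.IsWalk k P ∧ G.IsWalk k Q ∧
    P 0 = x ∧ P k = y ∧ Q 0 = y ∧ Q k = x ∧
    G.WalksAvoid k P Q ∧ G.AvoidsWalk z k P ∧ G.AvoidsWalk z k Q

/-- `G` contains an anchored invertible pair. -/
def HasAnchoredInvertiblePair (G : LoopGraph V) : Prop :=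
  ∃ z x y, G.ZInvertiblePair z x y

end LoopGraph

/-!
Circular arcs: the circle is modelled as the half-open interval `[0,1)`;
an arc is described by its left and right endpoints (clockwise = increasing),
wrapping around if necessary.
-/

/-- Membership of the point `t` in the clockwise arc from `l` to `r`. -/
def arcMem (l r t : ℝ) : Prop :=
  (l ≤ r ∧ l ≤ t ∧ t ≤ r) ∨ (r < l ∧ (l ≤ t ∨ t ≤ r))

/-- The arc `[l₁,r₁]` is contained in the arc `[l₂,r₂]`. -/
def arcSubset (l₁ r₁ l₂ r₂ : ℝ) : Prop :=
  ∀ t ∈ Set.Ico (0 : ℝ) 1, arcMem l₁ r₁ t → arcMem l₂ r₂ t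

/-- The arc `[lu,ru]` properly contains the arc `[lv,rv]`. -/
def arcProperContains (lu ru lv rv : ℝ) : Prop :=
  arcSubset lv rv lu ru ∧ ¬ arcSubset lu ru lv rv

/-- The arcs `[lu,ru]` and `[lv,rv]` together cover the whole circle. -/
def arcsCover (lu ru lv rv : ℝ) : Prop :=
  ∀ t ∈ Set.Ico (0 : ℝ) 1, arcMem lu ru t ∨ arcMem lv rv t

/-- `b` lies strictly between `a` and `c` in the clockwise cyclic order on `[0,1)`. -/
def cycBtw (a b c : ℝ) : Prop :=
  (a < b ∧ b < c) ∨ (b < c ∧ c < a) ∨ (c < a ∧ a < b)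

/-- The four points `a, b, c, d` of `[0,1)` occur in this clockwise cyclic order. -/
def cyc4 (a b c d : ℝ) : Prop := cycBtw a b c ∧ cycBtw a c d

namespace LoopGraph

variable {V W : Type}

/-- `(l, r)` is a circular-arc representation of `G`: all endpoints are distinct and
two vertices are adjacent iff their arcs intersect. -/
def IsCARep (G : LoopGraph V) (l r : V → ℝ) : Prop :=
  (∀ v, l v ∈ Set.Ico (0 : ℝ) 1) ∧ (∀ v, r v ∈ Set.Ico (0 : ℝ) 1) ∧
  Function.Injective (Sum.elim l r) ∧
  ∀ u v, (G.Adj u v ↔ ∃ t ∈ Set.Ico (0 : ℝ) 1,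
    arcMem (l u) (r u) t ∧ arcMem (l v) (r v) t)

/-- `G` is a circular-arc graph. -/
def IsCircularArc (G : LoopGraph V) : Prop := ∃ l r : V → ℝ, G.IsCARep l r

/-- A normalized circular-arc representation of `G`. -/
def IsNormalizedRep (G : LoopGraph V) (l r : V → ℝ) : Prop :=
  G.IsCARep l r ∧
  ∀ u v, G.Adj u v → u ≠ v →
    (arcProperContains (l u) (r u) (l v) (r v) ↔ G.nbhd v ⊆ G.nbhd u) ∧
    (arcsCover (l u) (r u) (l v) (r v) ↔ G.TwoOverlapEdge u v)

/-- A circular-arc representation of the induced subgraph `G[X]` which is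
normalized with respect to `G`. -/
def IsNormalizedRepOn (G : LoopGraph V) (X : Set V) (l r : V → ℝ) : Prop :=
  (∀ v ∈ X, l v ∈ Set.Ico (0 : ℝ) 1) ∧ (∀ v ∈ X, r v ∈ Set.Ico (0 : ℝ) 1) ∧
  Set.InjOn l X ∧ Set.InjOn r X ∧ (∀ u ∈ X, ∀ v ∈ X, l u ≠ r v) ∧
  (∀ u ∈ X, ∀ v ∈ X,
    (G.Adj u v ↔ ∃ t ∈ Set.Ico (0 : ℝ) 1,
      arcMem (l u) (r u) t ∧ arcMem (l v) (r v) t)) ∧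
  (∀ u ∈ X, ∀ v ∈ X, G.Adj u v → u ≠ v →
    (arcProperContains (l u) (r u) (l v) (r v) ↔ G.nbhd v ⊆ G.nbhd u) ∧
    (arcsCover (l u) (r u) (l v) (r v) ↔ G.TwoOverlapEdge u v))

/-! Circular completions. -/

/-- `f` exhibits `G` as an induced subgraph of `H`. -/
def InducedEmb (G : LoopGraph V) (H : LoopGraph W) (f : V → W) : Prop :=
  Function.Injective f ∧ ∀ u v, (G.Adj u v ↔ H.Adj (f u) (f v))

/-- Every edge of `G` has the same type (inclusion / 1-overlap / 2-overlap)
in `G` and in `H`. -/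
def SameEdgeTypes (G : LoopGraph V) (H : LoopGraph W) (f : V → W) : Prop :=
  ∀ u v, G.Adj u v →
    ((G.InclusionEdge u v ↔ H.InclusionEdge (f u) (f v)) ∧
     (G.OneOverlapEdge u v ↔ H.OneOverlapEdge (f u) (f v)) ∧
     (G.TwoOverlapEdge u v ↔ H.TwoOverlapEdge (f u) (f v)))

/-- `H` (with embedding `f`) is a circular completion of `G`: a circularly-paired
graph with the fewest possible vertices containing `G` as an induced subgraph with
all edge types preserved. -/
def IsCircularCompletion (G : LoopGraph V) (H : LoopGraph W) (f : V → W) : Prop :=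
  Finite W ∧ G.InducedEmb H f ∧ G.SameEdgeTypes H f ∧ H.CircularlyPaired ∧
  ∀ (W' : Type) (H' : LoopGraph W') (f' : V → W'), Finite W' →
    G.InducedEmb H' f' → G.SameEdgeTypes H' f' → H'.CircularlyPaired →
    Nat.card W ≤ Nat.card W'

/-! The anchored Δ-knotting graph. -/

/-- `A(z)`: vertices nonadjacent to `z` or overlapping `z`. -/
def Aset (G : LoopGraph V) (z : V) : Set V := {u | ¬ G.Adj z u ∨ G.Overlaps z u}

/-- `x` and `y` are `uz`-connected. -/
def UZConnected (G : LoopGraph V) (u z x y : V) : Prop :=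
  ¬ G.InclusionEdge x u ∧ ¬ G.InclusionEdge y u ∧ ¬ G.InclusionEdge x z ∧
  ¬ G.InclusionEdge y z ∧ ¬ G.InclusionEdge u z ∧
  ∃ k, ∃ P : ℕ → V, G.IsWalk k P ∧ P 0 = x ∧ P k = y ∧
    G.AvoidsWalk u k P ∧ G.AvoidsWalk z k P

/-- `X` is a `uz`-component: a maximal set of pairwise `uz`-connected vertices. -/
def IsUZComponent (G : LoopGraph V) (u z : V) (X : Set V) : Prop :=
  X.Nonempty ∧ (∀ x ∈ X, ∀ y ∈ X, G.UZConnected u z x y) ∧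
  ∀ Y : Set V, X ⊆ Y → (∀ x ∈ Y, ∀ y ∈ Y, G.UZConnected u z x y) → Y = X

/-- Vertices of the `z`-anchored Δ-knotting graph: copies `(u, X)` of `u ∈ A(z)`,
one for each `uz`-component `X`. -/
def KnotVertex (G : LoopGraph V) (z : V) (p : V × Set V) : Prop :=
  p.1 ∈ G.Aset z ∧ G.IsUZComponent p.1 z p.2

/-- Edges of the `z`-anchored Δ-knotting graph: for each edge `uv` of `G` with
`u, v ∈ A(z)`, an edge between the copy of `u` for `X` and the copy of `v` for `Y`
whenever `v ∈ X` and `u ∈ Y`. -/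
def KnotAdj (G : LoopGraph V) (z : V) (p q : V × Set V) : Prop :=
  G.Adj p.1 q.1 ∧ p.1 ∈ G.Aset z ∧ q.1 ∈ G.Aset z ∧ q.1 ∈ p.2 ∧ p.1 ∈ q.2

/-- The `z`-anchored Δ-knotting graph of `G` is bipartite (it is 2-colourable). -/
def KnotBipartite (G : LoopGraph V) (z : V) : Prop :=
  ∃ c : V × Set V → Bool, ∀ p q, G.KnotVertex z p → G.KnotVertex z q →
    G.KnotAdj z p q → c p ≠ c q

/-! Non-inverting sets. -/

/-- `X` is a non-inverting set of `G`. -/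
def NonInvertingSet (G : LoopGraph V) (X : Set V) : Prop :=
  (∀ u ∈ X, ∀ v ∈ X, ¬ G.TwoOverlapEdge u v) ∧
  ¬ ∃ x ∈ X, ∃ y ∈ X, ∃ k, 0 < k ∧ ∃ P Q : ℕ → V,
      G.IsWalk k P ∧ G.IsWalk k Q ∧ (∀ i ≤ k, P i ∈ X) ∧ (∀ i ≤ k, Q i ∈ X) ∧
      P 0 = x ∧ P k = y ∧ Q 0 = y ∧ Q k = x ∧ G.WalksAvoid k P Q

end LoopGraph

/-!
Edge-labelled graphs: graphs (with loops) in which every edge is labelled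
inclusion or overlap, loops being labelled inclusion.
-/

structure ELGraph (V : Type) where
  Adj : V → V → Prop
  symm : ∀ u v, Adj u v → Adj v u
  refl : ∀ u, Adj u u
  /-- `Ovl u v` means the edge `uv` is labelled as an overlap edge. -/
  Ovl : V → V → Prop
  ovl_symm : ∀ u v, Ovl u v → Ovl v u
  ovl_adj : ∀ u v, Ovl u v → Adj u v
  ovl_irrefl : ∀ u, ¬ Ovl u u

namespace ELGraph

variable {V : Type}

/-- Closed neighbourhood `N[u]`. -/
def nbhd (G : ELGraph V) (u : V) : Set V := {v | G.Adj u v}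

/-- `uv` is (labelled as) an inclusion edge. -/
def InclEdge (G : ELGraph V) (u v : V) : Prop := G.Adj u v ∧ ¬ G.Ovl u v

/-- A walk with `k` edges. -/
def IsWalk (G : ELGraph V) (k : ℕ) (P : ℕ → V) : Prop :=
  ∀ i < k, G.Adj (P i) (P (i + 1))

/-- `z` avoids the edge `ab`: every neighbour of `z` among `a, b` overlaps `z`, and if
`z` overlaps both `a` and `b` then the edge `ab` is an inclusion edge. -/
def AvoidsEdge (G : ELGraph V) (z a b : V) : Prop :=
  (G.Adj z a → G.Ovl z a) ∧ (G.Adj z b → G.Ovl z b) ∧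
  (G.Ovl z a → G.Ovl z b → ¬ G.Ovl a b)

/-- The walks `P` and `Q` (both with `k` edges) avoid each other. -/
def WalksAvoid (G : ELGraph V) (k : ℕ) (P Q : ℕ → V) : Prop :=
  ∀ i < k, G.AvoidsEdge (P i) (Q i) (Q (i + 1)) ∧ G.AvoidsEdge (Q (i + 1)) (P i) (P (i + 1))

/-- The ordered pair `p` is related to the ordered pair `q`: there exist a walk from
`p.1` to `q.1` and a walk from `p.2` to `q.2`, of the same (positive) length, that
avoid each other. -/
def Related (G : ELGraph V) (p q : V × V) : Prop :=
  ∃ k, 0 < k ∧ ∃ P Q : ℕ → V, G.IsWalk k P ∧ G.IsWalk k Q ∧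
    P 0 = p.1 ∧ Q 0 = p.2 ∧ P k = q.1 ∧ Q k = q.2 ∧ G.WalksAvoid k P Q

/-- A Δ-implication class: a maximal set of pairwise related ordered pairs. -/
def IsDeltaClass (G : ELGraph V) (A : Set (V × V)) : Prop :=
  A.Nonempty ∧ (∀ p ∈ A, ∀ q ∈ A, G.Related p q) ∧
  ∀ B : Set (V × V), A ⊆ B → (∀ p ∈ B, ∀ q ∈ B, G.Related p q) → B = A

/-- `A⁻¹ = {(u,v) : (v,u) ∈ A}`. -/
def inv (A : Set (V × V)) : Set (V × V) := {p | p.swap ∈ A}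

/-- `span A`: the set of vertices incident to pairs of `A`. -/
def span (A : Set (V × V)) : Set V := {v | ∃ p ∈ A, v = p.1 ∨ v = p.2}

/-- `S` induces a clique. -/
def IsClique (G : ELGraph V) (S : Set V) : Prop := ∀ a ∈ S, ∀ b ∈ S, G.Adj a b

/-- A Δ-module. -/
def IsDeltaModule (G : ELGraph V) (S : Set V) : Prop :=
  S.Nonempty ∧
  (∀ x, x ∉ S →
    ((∀ s ∈ S, ¬ G.Adj x s) ∨ (∀ s ∈ S, G.InclEdge x s) ∨ (∀ s ∈ S, G.Ovl x s))) ∧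
  (¬ G.IsClique S → ∀ x, x ∉ S → ∀ s ∈ S, ¬ G.Ovl x s)

/-- A trivial Δ-module: the whole vertex set or a single vertex. -/
def TrivialModule (S : Set V) : Prop := S = Set.univ ∨ ∃ a : V, S = {a}

/-- `{a,b}` is a Δ-invertible pair: `(a,b)` is related to `(b,a)`. -/
def DeltaInvertiblePair (G : ELGraph V) (a b : V) : Prop := G.Related (a, b) (b, a)

/-- An interval ordering of an edge-labelled graph. -/
def IsIntervalOrdering (G : ELGraph V) (lt : V → V → Prop) : Prop :=
  IsStrictTotalOrder V lt ∧
  ¬ ∃ a b c, lt a b ∧ lt b c ∧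
    ((¬ G.Adj a b ∧ G.Adj a c) ∨
     (G.InclEdge a b ∧ ¬ G.Adj a c ∧ G.Adj b c) ∨
     (G.Ovl a b ∧ G.Adj a c ∧ ¬ G.Adj b c) ∨
     (G.Ovl a b ∧ G.Ovl b c ∧ G.InclEdge a c) ∨
     (G.InclEdge a b ∧ G.InclEdge b c ∧ G.Ovl a c))

/-- An interval representation of `G` consistent with its labelling. -/
def IsConsistentIntervalRep (G : ELGraph V) (l r : V → ℝ) : Prop :=
  (∀ v, l v ≤ r v) ∧
  (∀ u v, (G.Adj u v ↔ (Set.Icc (l u) (r u) ∩ Set.Icc (l v) (r v)).Nonempty)) ∧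
  (∀ u v, (G.Ovl u v ↔
    ((Set.Icc (l u) (r u) ∩ Set.Icc (l v) (r v)).Nonempty ∧
     ¬ Set.Icc (l u) (r u) ⊆ Set.Icc (l v) (r v) ∧
     ¬ Set.Icc (l v) (r v) ⊆ Set.Icc (l u) (r u))))

/-- A consistently edge-labelled graph: there is a transitive orientation `D` of its
inclusion edges (between distinct vertices) such that `D u v → N[v] ⊆ N[u]`. -/
def ConsistentlyLabelled (G : ELGraph V) : Prop :=
  ∃ D : V → V → Prop,
    (∀ u v, D u v → u ≠ v ∧ G.InclEdge u v) ∧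
    (∀ u v, u ≠ v → G.InclEdge u v → (D u v ↔ ¬ D v u)) ∧
    (∀ u v w, D u v → D v w → D u w) ∧
    (∀ u v, D u v → G.nbhd v ⊆ G.nbhd u)

end ELGraph

/-!
Each vertex `v ∉ X` is circularly paired with some `u ∈ X`; give `v` the complement of the arc
of `u`, shrunk at both ends by a small amount `ε_v` (distinct for distinct vertices, and below
half the least distance `δ` between endpoints of arcs of `X`, so that no two endpoints collide).

Since `{v, u}` is a spanning pair, `v` is adjacent to `w ∈ X` exactly when `N[w] ⊄ N[u]`; by (N1)
(trivially if `w, u` are non-adjacent) this says that the arc of `w` is not properly contained in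
that of `u`, i.e. that it meets the complement of the arc of `u`, and then, endpoints being `δ`
apart, also the shrunk complement. For `v, v'` outside `X` whose partners `u ≠ u'` are adjacent,
`v` and `v'` are adjacent exactly when `uu'` is not a 2-overlap edge, i.e. by (N2) when the arcs
of `u, u'` do not cover the circle, i.e. when the shrunk complements meet. If `u = u'` or `u, u'`
are non-adjacent, then `v, v'` are adjacent (in the latter case since otherwise `v` and `u'` would
be true twins) and the shrunk complements meet. All computations on arcs are made after rotating
the circle so that the right end of the arc of `u` sits at `0`.
-/

open Set Filter Topology

namespace Int

variable {R : Type*} [CommRing R] [LinearOrder R] [IsStrictOrderedRing R] [FloorRing R]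

theorem fract_mem_Ico (a : R) : fract a ∈ Ico 0 1 := ⟨fract_nonneg a, fract_lt_one a⟩

theorem fract_fract_add (a b : R) : fract (fract a + b) = fract (a + b) :=
  fract_eq_fract.2 ⟨-⌊a⌋, by push_cast; rw [← fract_sub_self]; ring⟩

theorem fract_fract_sub (a b : R) : fract (fract a - b) = fract (a - b) :=
  fract_eq_fract.2 ⟨-⌊a⌋, by push_cast; rw [← fract_sub_self]; ring⟩

theorem fract_sub_fract (a b : R) : fract (a - fract b) = fract (a - b) :=
  fract_eq_fract.2 ⟨⌊b⌋, by rw [← neg_neg (⌊b⌋ : R), ← fract_sub_self]; ring⟩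

theorem fract_fract_add_sub (a b : R) : fract (fract (a + b) - b) = fract a := by
  rw [fract_fract_sub, add_sub_cancel_right]

theorem fract_sub_of_le {a b : R} (ha : a ∈ Ico 0 1) (hb : b ∈ Ico 0 1) (h : b ≤ a) :
    fract (a - b) = a - b :=
  fract_eq_self.2 ⟨sub_nonneg.2 h, by linarith [ha.2, hb.1]⟩

theorem fract_sub_of_lt {a b : R} (ha : a ∈ Ico 0 1) (hb : b ∈ Ico 0 1) (h : a < b) :
    fract (a - b) = a - b + 1 :=
  fract_eq_iff.2 ⟨by linarith [ha.1, hb.2], by linarith, -1, by push_cast; ring⟩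

theorem fract_sub_pos {a b : R} (ha : a ∈ Ico 0 1) (hb : b ∈ Ico 0 1) (hab : a ≠ b) :
    0 < fract (a - b) := by
  rcases hab.lt_or_gt with h | h
  · rw [fract_sub_of_lt ha hb h]; linarith [ha.1, hb.2]
  · rw [fract_sub_of_le ha hb h.le]; linarith

theorem fract_sub_add_fract_sub {a b : R} (ha : a ∈ Ico 0 1) (hb : b ∈ Ico 0 1)
    (hab : a ≠ b) : fract (a - b) + fract (b - a) = 1 := by
  rcases hab.lt_or_gt with h | h
  · rw [fract_sub_of_lt ha hb h, fract_sub_of_le hb ha h.le]; ring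
  · rw [fract_sub_of_le ha hb h.le, fract_sub_of_lt hb ha h]; ring

theorem fract_eq_abs_or_fract_neg_eq_abs {d : R} (hd : |d| < 1) :
    fract d = |d| ∨ fract (-d) = |d| := by
  rcases le_or_gt 0 d with h | h
  · left
    rw [abs_of_nonneg h, fract_eq_self]
    exact ⟨h, (le_abs_self d).trans_lt hd⟩
  · right
    rw [abs_of_neg h, fract_eq_self]
    exact ⟨by linarith, (neg_le_abs d).trans_lt hd⟩

end Int

theorem exists_injective_forall_mem_Ioo (V : Type*) [Finite V] {a b : ℝ} (hab : a < b) :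
    ∃ f : V → ℝ, Function.Injective f ∧ ∀ v, f v ∈ Ioo a b := by
  obtain ⟨n, ⟨e⟩⟩ := Finite.exists_equiv_fin V
  have : Infinite (Ioo a b) := (Set.Ioo_infinite hab).to_subtype
  let f := Infinite.natEmbedding (Ioo a b)
  exact ⟨fun v => f (e v), Subtype.val_injective.comp <| f.injective.comp <|
    Fin.val_injective.comp e.injective, fun v => (f (e v)).2⟩

theorem arcMem_left (l r : ℝ) : arcMem l r l := by
  rcases le_or_gt l r with h | h
  · exact Or.inl ⟨h, le_rfl, h⟩
  · exact Or.inr ⟨h, Or.inl le_rfl⟩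

theorem arcMem_right (l r : ℝ) : arcMem l r r := by
  rcases le_or_gt l r with h | h
  · exact Or.inl ⟨h, h, le_rfl⟩
  · exact Or.inr ⟨h, Or.inr le_rfl⟩

theorem arcMem_zero_right_iff {g s : ℝ} (hg : 0 < g) :
    arcMem g 0 s ↔ ¬ (0 < s ∧ s < g) := by
  unfold arcMem
  constructor
  · rintro (⟨h, -⟩ | ⟨-, h | h⟩) ⟨h₁, h₂⟩ <;> linarith
  · intro h
    by_cases h' : s < g
    · exact Or.inr ⟨hg, Or.inr (not_lt.1 fun h₁ => h ⟨h₁, h'⟩)⟩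
    · exact Or.inr ⟨hg, Or.inl (not_lt.1 h')⟩

theorem arcMem_iff_fract_sub_le {l r t : ℝ} (hl : l ∈ Ico (0 : ℝ) 1) (hr : r ∈ Ico (0 : ℝ) 1)
    (ht : t ∈ Ico (0 : ℝ) 1) :
    arcMem l r t ↔ Int.fract (t - l) ≤ Int.fract (r - l) := by
  unfold arcMem
  rcases le_or_gt l r with h₁ | h₁ <;> rcases le_or_gt l t with h₂ | h₂
  · rw [Int.fract_sub_of_le ht hl h₂, Int.fract_sub_of_le hr hl h₁]
    constructor
    · rintro (⟨-, -, h⟩ | ⟨h, -⟩) <;> linarith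
    · exact fun h => Or.inl ⟨h₁, h₂, by linarith⟩
  · rw [Int.fract_sub_of_lt ht hl h₂, Int.fract_sub_of_le hr hl h₁]
    constructor
    · rintro (⟨-, h, -⟩ | ⟨h, -⟩) <;> linarith
    · intro h; linarith [ht.1, hr.2]
  · rw [Int.fract_sub_of_le ht hl h₂, Int.fract_sub_of_lt hr hl h₁]
    exact iff_of_true (Or.inr ⟨h₁, Or.inl h₂⟩) (by linarith [ht.2, hr.1])
  · rw [Int.fract_sub_of_lt ht hl h₂, Int.fract_sub_of_lt hr hl h₁]
    constructor
    · rintro (⟨h, -⟩ | ⟨-, h | h⟩) <;> linarith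
    · exact fun h => Or.inr ⟨h₁, Or.inr (by linarith)⟩

theorem arcMem_fract_iff_rotate (x y t p : ℝ) :
    arcMem (Int.fract x) (Int.fract y) (Int.fract t) ↔
      arcMem (Int.fract (x - p)) (Int.fract (y - p)) (Int.fract (t - p)) := by
  simp only [arcMem_iff_fract_sub_le (Int.fract_mem_Ico _) (Int.fract_mem_Ico _)
    (Int.fract_mem_Ico _), Int.fract_fract_sub, Int.fract_sub_fract, sub_sub_sub_cancel_right]

theorem arcMem_iff_rotate {x y t : ℝ} (hx : x ∈ Ico (0 : ℝ) 1) (hy : y ∈ Ico (0 : ℝ) 1)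
    (ht : t ∈ Ico (0 : ℝ) 1) (p : ℝ) :
    arcMem x y t ↔ arcMem (Int.fract (x - p)) (Int.fract (y - p)) (Int.fract (t - p)) := by
  conv_lhs => rw [← Int.fract_eq_self.2 hx, ← Int.fract_eq_self.2 hy, ← Int.fract_eq_self.2 ht]
  exact arcMem_fract_iff_rotate x y t p

def arcsMeet (l₁ r₁ l₂ r₂ : ℝ) : Prop :=
  ∃ t ∈ Ico (0 : ℝ) 1, arcMem l₁ r₁ t ∧ arcMem l₂ r₂ t

theorem arcsMeet_comm {l₁ r₁ l₂ r₂ : ℝ} : arcsMeet l₁ r₁ l₂ r₂ ↔ arcsMeet l₂ r₂ l₁ r₁ :=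
  exists_congr fun _ => and_congr_right fun _ => and_comm

/- In the next two lemmas the circle is rotated so that an arc `[g, 0]` sits with its right end
at `0`; its complement `(0, g)` is shrunk to `[ε, g - ε]`, and the other endpoints involved stay
`δ` away from `0` and `g`. -/

theorem exists_mem_Icc_arcMem_of_arcMem {δ ε g L R τ : ℝ} (hε₀ : 0 ≤ ε) (hε : 2 * ε ≤ δ)
    (hg : δ ≤ g) (hL : δ ≤ L) (hR : δ ≤ R) (hLg : δ ≤ |L - g|) (hRg : δ ≤ |R - g|)
    (hτ : τ ∈ Ico 0 g) (hτLR : arcMem L R τ) :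
    ∃ σ ∈ Icc ε (g - ε), arcMem L R σ := by
  obtain ⟨hτ₀, hτg⟩ := hτ
  by_cases hLg' : L < g
  · rw [abs_of_neg (by linarith)] at hLg
    exact ⟨L, ⟨by linarith, by linarith⟩, arcMem_left L R⟩
  by_cases hRg' : R < g
  · rw [abs_of_neg (by linarith)] at hRg
    exact ⟨R, ⟨by linarith, by linarith⟩, arcMem_right L R⟩
  refine ⟨ε, ⟨le_rfl, by linarith⟩, ?_⟩
  unfold arcMem at hτLR ⊢
  rcases hτLR with ⟨-, h, -⟩ | ⟨h, h' | h'⟩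
  · linarith
  · linarith
  · exact Or.inr ⟨h, Or.inr (by linarith)⟩

theorem exists_mem_Icc_arcMem_of_not_arcMem {δ ε ε' g A B τ : ℝ} (hε : 2 * ε ≤ δ)
    (hε'₀ : 0 < ε') (hε' : 2 * ε' ≤ δ) (hg : δ ≤ g) (hA : δ ≤ A) (hB : 0 ≤ B)
    (hBg : δ ≤ |B - g|) (hAB : δ ≤ |A - B|) (hτ : τ ∈ Ioo 0 g) (hτAB : ¬ arcMem A B τ) :
    ∃ σ ∈ Icc ε (g - ε), arcMem (B + ε') (A - ε') σ := by
  obtain ⟨hτ₀, hτg⟩ := hτ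
  unfold arcMem at hτAB ⊢
  push Not at hτAB
  by_cases hBτ : B < τ
  · rw [abs_of_neg (by linarith)] at hBg
    refine ⟨B + δ / 2, ⟨by linarith, by linarith⟩, ?_⟩
    rcases le_or_gt A B with h | h
    · exact Or.inr ⟨by linarith, Or.inl (by linarith)⟩
    · rw [abs_of_pos (by linarith)] at hAB
      have := hτAB.2 h
      exact Or.inl ⟨by linarith, by linarith, by linarith⟩
  · refine ⟨δ / 2, ⟨by linarith, by linarith⟩, ?_⟩
    rcases le_or_gt A B with h | h
    · have := hτAB.1 h
      exact Or.inr ⟨by linarith, Or.inr (by linarith)⟩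
    · exact absurd (not_lt.1 hBτ) (hτAB.2 h).2.not_ge

/-- Distinct points of `S` are at clockwise distance at least `δ` from each other (so also at
most `1 - δ`, the pair being taken in both orders). -/
def CyclicallySeparated (δ : ℝ) (S : Set ℝ) : Prop :=
  ∀ e ∈ S, ∀ f ∈ S, e ≠ f → δ ≤ Int.fract (e - f)

theorem exists_cyclicallySeparated {S : Set ℝ} (hS : S.Finite) (hS01 : S ⊆ Ico 0 1) :
    ∃ δ, 0 < δ ∧ δ ≤ 1 ∧ CyclicallySeparated δ S := by
  have hev : ∀ᶠ δ in 𝓝[>] (0 : ℝ), δ ≤ 1 ∧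
      ∀ p ∈ S ×ˢ S, p.1 ≠ p.2 → δ ≤ Int.fract (p.1 - p.2) := by
    refine (eventually_le_nhds one_pos).filter_mono nhdsWithin_le_nhds |>.and ?_
    refine ((hS.prod hS).eventually_all).2 fun p hp => ?_
    by_cases hp' : p.1 = p.2
    · exact Eventually.of_forall fun _ h => absurd hp' h
    · refine (eventually_le_nhds ?_).filter_mono nhdsWithin_le_nhds |>.mono fun _ h _ => h
      exact Int.fract_sub_pos (hS01 hp.1) (hS01 hp.2) hp'
  obtain ⟨δ, ⟨hδ1, hδS⟩, hδ⟩ := (hev.and self_mem_nhdsWithin).exists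
  exact ⟨δ, hδ, hδ1, fun e he f hf hef => hδS (e, f) ⟨he, hf⟩ hef⟩

namespace CyclicallySeparated

variable {δ : ℝ} {S : Set ℝ} {e f : ℝ}

theorem fract_sub_le (hsep : CyclicallySeparated δ S) (hS01 : S ⊆ Ico 0 1) (he : e ∈ S)
    (hf : f ∈ S) (hef : e ≠ f) : Int.fract (e - f) ≤ 1 - δ := by
  linarith [Int.fract_sub_add_fract_sub (hS01 he) (hS01 hf) hef, hsep f hf e he hef.symm]

theorem le_abs_fract_sub_sub (hsep : CyclicallySeparated δ S) (he : e ∈ S) (hf : f ∈ S)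
    (hef : e ≠ f) (p : ℝ) : δ ≤ |Int.fract (e - p) - Int.fract (f - p)| := by
  have hd : |Int.fract (e - p) - Int.fract (f - p)| < 1 := abs_sub_lt_iff.2
    ⟨by linarith [Int.fract_lt_one (e - p), Int.fract_nonneg (f - p)],
      by linarith [Int.fract_lt_one (f - p), Int.fract_nonneg (e - p)]⟩
  rcases Int.fract_eq_abs_or_fract_neg_eq_abs hd with h | h <;>
    simp only [neg_sub, Int.fract_fract_sub, Int.fract_sub_fract, sub_sub_sub_cancel_right] at h
  · exact h ▸ hsep e he f hf hef
  · exact h ▸ hsep f hf e he hef.symm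

theorem eq_of_fract_add_eq (hsep : CyclicallySeparated δ S) (hδ : δ ≤ 1) (he : e ∈ S)
    (hf : f ∈ S) {s s' : ℝ} (hs : |s| < δ / 2) (hs' : |s'| < δ / 2)
    (h : Int.fract (e + s) = Int.fract (f + s')) : e = f ∧ s = s' := by
  obtain ⟨z, hz⟩ := Int.fract_eq_fract.1 h
  have h₁ : Int.fract (e - f) = Int.fract (s' - s) := Int.fract_eq_fract.2 ⟨z, by linarith⟩
  have h₂ : Int.fract (f - e) = Int.fract (-(s' - s)) :=
    Int.fract_eq_fract.2 ⟨-z, by push_cast; linarith⟩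
  have hd : |s' - s| < 1 := ((abs_sub _ _).trans_lt (by linarith)).trans_le hδ
  have hef : e = f := by
    by_contra hef
    rcases Int.fract_eq_abs_or_fract_neg_eq_abs hd with h | h
    · linarith [h₁ ▸ hsep e he f hf hef, (abs_sub s' s).trans_lt (add_lt_add hs' hs)]
    · linarith [h₂ ▸ hsep f hf e he (Ne.symm hef), (abs_sub s' s).trans_lt (add_lt_add hs' hs)]
  subst hef
  rw [sub_self, Int.fract_zero] at h₁ h₂
  have hss' : |s' - s| = 0 := by
    rcases Int.fract_eq_abs_or_fract_neg_eq_abs hd with h | h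
    · rw [← h, ← h₁]
    · rw [← h, ← h₂]
  exact ⟨rfl, (sub_eq_zero.1 (abs_eq_zero.1 hss')).symm⟩

end CyclicallySeparated

def arcEndpoints {V : Type*} (X : Set V) (l r : V → ℝ) : Set ℝ := l '' X ∪ r '' X

theorem left_mem_arcEndpoints {V : Type*} {X : Set V} {l r : V → ℝ} {w : V} (hw : w ∈ X) :
    l w ∈ arcEndpoints X l r :=
  Or.inl ⟨w, hw, rfl⟩

theorem right_mem_arcEndpoints {V : Type*} {X : Set V} {l r : V → ℝ} {w : V} (hw : w ∈ X) :
    r w ∈ arcEndpoints X l r :=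
  Or.inr ⟨w, hw, rfl⟩

namespace LoopGraph

variable {V : Type} {G : LoopGraph V} {X : Set V} {l r : V → ℝ} {u u' v v' w : V} {t : ℝ}

theorem adj_comm (G : LoopGraph V) : G.Adj u v ↔ G.Adj v u :=
  ⟨G.symm u v, G.symm v u⟩

theorem CircularPair.adj_iff_not_nbhd_subset (h : G.CircularPair v u) (w : V) :
    G.Adj v w ↔ ¬ G.nbhd w ⊆ G.nbhd u := by
  refine ⟨fun hvw hsub => h.2 (G.symm _ _ (hsub (G.symm _ _ hvw))), fun hsub => ?_⟩
  by_contra hvw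
  exact hsub (h.1.2 w hvw)

theorem CircularPair.adj_of_partner_eq (h : G.CircularPair v u) (h' : G.CircularPair v' u) :
    G.Adj v v' :=
  G.symm _ _ (h'.1.1 v (fun huv => h.2 (G.symm _ _ huv)) (G.refl v))

theorem CircularPair.adj_iff_not_twoOverlapEdge (h : G.CircularPair v u)
    (h' : G.CircularPair v' u') (huu' : G.Adj u u') :
    G.Adj v v' ↔ ¬ G.TwoOverlapEdge u u' := by
  constructor
  · intro hvv' h2
    exact h'.2 (G.symm _ _ (h2.2.2 v (fun huv => h.2 (G.symm _ _ huv)) hvv'))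
  · intro h2
    by_contra hvv'
    have hv'u : G.nbhd v' ⊆ G.nbhd u := h.1.2 v' hvv'
    have hvu' : G.nbhd v ⊆ G.nbhd u' := h'.1.2 v (fun h => hvv' (G.symm _ _ h))
    refine h2 ⟨⟨huu', fun hsub => h'.2 (G.symm _ _ (hsub (hv'u (G.refl v')))),
      fun hsub => h.2 (G.symm _ _ (hsub (hvu' (G.refl v))))⟩, ?_, ?_⟩
    · exact fun x hx => (h'.1.1 x hx).trans hv'u
    · exact fun y hy => (h.1.1 y hy).trans hvu'

theorem CircularPair.nbhd_eq_of_not_adj (h : G.CircularPair v u) (h' : G.CircularPair v' u')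
    (huu' : ¬ G.Adj u u') (hvv' : ¬ G.Adj v v') : G.nbhd v = G.nbhd u' :=
  (h'.1.2 v fun hv'v => hvv' (G.symm _ _ hv'v)).antisymm (h.1.1 u' huu')

namespace IsNormalizedRepOn

theorem l_mem_Ico (h : G.IsNormalizedRepOn X l r) (hw : w ∈ X) : l w ∈ Ico (0 : ℝ) 1 :=
  h.1 w hw

theorem r_mem_Ico (h : G.IsNormalizedRepOn X l r) (hw : w ∈ X) : r w ∈ Ico (0 : ℝ) 1 :=
  h.2.1 w hw

theorem l_injOn (h : G.IsNormalizedRepOn X l r) : InjOn l X := h.2.2.1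

theorem r_injOn (h : G.IsNormalizedRepOn X l r) : InjOn r X := h.2.2.2.1

theorem l_ne_r (h : G.IsNormalizedRepOn X l r) (hu : u ∈ X) (hw : w ∈ X) : l u ≠ r w :=
  h.2.2.2.2.1 u hu w hw

theorem adj_iff_arcsMeet (h : G.IsNormalizedRepOn X l r) (hu : u ∈ X) (hw : w ∈ X) :
    G.Adj u w ↔ arcsMeet (l u) (r u) (l w) (r w) :=
  h.2.2.2.2.2.1 u hu w hw

theorem arcsCover_iff (h : G.IsNormalizedRepOn X l r) (hu : u ∈ X) (hw : w ∈ X)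
    (hadj : G.Adj u w) (huw : u ≠ w) :
    arcsCover (l u) (r u) (l w) (r w) ↔ G.TwoOverlapEdge u w :=
  (h.2.2.2.2.2.2 u hu w hw hadj huw).2

theorem arcProperContains_iff (h : G.IsNormalizedRepOn X l r) (hu : u ∈ X) (hw : w ∈ X)
    (huw : u ≠ w) :
    arcProperContains (l u) (r u) (l w) (r w) ↔ G.nbhd w ⊆ G.nbhd u := by
  by_cases hadj : G.Adj u w
  · exact (h.2.2.2.2.2.2 u hu w hw hadj huw).1
  refine iff_of_false (fun hc => hadj ((h.adj_iff_arcsMeet hu hw).2 ?_))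
    fun hc => hadj (hc (G.refl w))
  exact ⟨l w, h.l_mem_Ico hw, hc.1 _ (h.l_mem_Ico hw) (arcMem_left _ _), arcMem_left _ _⟩

theorem arcEndpoints_subset_Ico (h : G.IsNormalizedRepOn X l r) : arcEndpoints X l r ⊆ Ico 0 1 := by
  rintro _ (⟨w, hw, rfl⟩ | ⟨w, hw, rfl⟩)
  exacts [h.l_mem_Ico hw, h.r_mem_Ico hw]

theorem arcMem_iff (h : G.IsNormalizedRepOn X l r) (hu : u ∈ X) (ht : t ∈ Ico (0 : ℝ) 1) :
    arcMem (l u) (r u) t ↔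
      ¬ (0 < Int.fract (t - r u) ∧ Int.fract (t - r u) < Int.fract (l u - r u)) := by
  rw [arcMem_iff_rotate (h.l_mem_Ico hu) (h.r_mem_Ico hu) ht (r u), sub_self, Int.fract_zero,
    arcMem_zero_right_iff (Int.fract_sub_pos (h.l_mem_Ico hu) (h.r_mem_Ico hu) (h.l_ne_r hu hu))]

/-- The witness is a point of the arc of `w` outside that of `u`, or else `r u`. -/
theorem exists_arcMem_fract_sub_lt (h : G.IsNormalizedRepOn X l r) (hu : u ∈ X)
    (hnot : ¬ arcProperContains (l u) (r u) (l w) (r w)) :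
    ∃ t ∈ Ico (0 : ℝ) 1, arcMem (l w) (r w) t ∧ Int.fract (t - r u) < Int.fract (l u - r u) := by
  by_cases hsub : arcSubset (l w) (r w) (l u) (r u)
  · have hsub' : arcSubset (l u) (r u) (l w) (r w) := not_not.1 fun h => hnot ⟨hsub, h⟩
    refine ⟨r u, h.r_mem_Ico hu, hsub' _ (h.r_mem_Ico hu) (arcMem_right _ _), ?_⟩
    rw [sub_self, Int.fract_zero]
    exact Int.fract_sub_pos (h.l_mem_Ico hu) (h.r_mem_Ico hu) (h.l_ne_r hu hu)
  · unfold arcSubset at hsub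
    push Not at hsub
    obtain ⟨t, ht, hwt, hut⟩ := hsub
    rw [h.arcMem_iff hu ht, not_not] at hut
    exact ⟨t, ht, hwt, hut.2⟩

end IsNormalizedRepOn

/-- The data for extending a representation of `G[X]` normalized with respect to `G`: each
`v ∉ X` is circularly paired with `partner v ∈ X` and will receive the complement of the arc of
its partner, shrunk at both ends by `shrink v`. -/
structure ArcExtension (G : LoopGraph V) (X : Set V) (l r : V → ℝ) where
  partner : V → V
  shrink : V → ℝ
  δ : ℝ
  normalized : G.IsNormalizedRepOn X l r
  partner_mem : ∀ v ∉ X, partner v ∈ X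
  circularPair : ∀ v ∉ X, G.CircularPair v (partner v)
  δ_le_one : δ ≤ 1
  separated : CyclicallySeparated δ (arcEndpoints X l r)
  shrink_pos : ∀ v, 0 < shrink v
  two_mul_shrink_lt : ∀ v, 2 * shrink v < δ
  shrink_injective : Function.Injective shrink

namespace ArcExtension

variable (E : G.ArcExtension X l r)

open Classical in
noncomputable def left (v : V) : ℝ :=
  if v ∈ X then l v else Int.fract (r (E.partner v) + E.shrink v)

open Classical in
noncomputable def right (v : V) : ℝ :=
  if v ∈ X then r v else Int.fract (l (E.partner v) - E.shrink v)

theorem left_of_mem (hv : v ∈ X) : E.left v = l v := if_pos hv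

theorem right_of_mem (hv : v ∈ X) : E.right v = r v := if_pos hv

theorem left_of_not_mem (hv : v ∉ X) :
    E.left v = Int.fract (r (E.partner v) + E.shrink v) := if_neg hv

theorem right_of_not_mem (hv : v ∉ X) :
    E.right v = Int.fract (l (E.partner v) - E.shrink v) := if_neg hv

theorem left_mem_Ico (v : V) : E.left v ∈ Ico (0 : ℝ) 1 := by
  by_cases hv : v ∈ X
  · rw [E.left_of_mem hv]; exact E.normalized.l_mem_Ico hv
  · rw [E.left_of_not_mem hv]; exact Int.fract_mem_Ico _

theorem right_mem_Ico (v : V) : E.right v ∈ Ico (0 : ℝ) 1 := by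
  by_cases hv : v ∈ X
  · rw [E.right_of_mem hv]; exact E.normalized.r_mem_Ico hv
  · rw [E.right_of_not_mem hv]; exact Int.fract_mem_Ico _

theorem shrink_lt_δ (v : V) : E.shrink v < E.δ := by
  linarith [E.shrink_pos v, E.two_mul_shrink_lt v]

theorem le_fract_l_sub_r (hu : u ∈ X) : E.δ ≤ Int.fract (l u - r u) :=
  E.separated _ (left_mem_arcEndpoints hu) _ (right_mem_arcEndpoints hu)
    (E.normalized.l_ne_r hu hu)

theorem arcMem_left_right_iff (hv : v ∉ X) (ht : t ∈ Ico (0 : ℝ) 1) (p : ℝ) :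
    arcMem (E.left v) (E.right v) t ↔
      arcMem (Int.fract (Int.fract (r (E.partner v) - p) + E.shrink v))
        (Int.fract (Int.fract (l (E.partner v) - p) - E.shrink v)) (Int.fract (t - p)) := by
  conv_lhs => rw [E.left_of_not_mem hv, E.right_of_not_mem hv, ← Int.fract_eq_self.2 ht,
    arcMem_fract_iff_rotate _ _ _ p]
  rw [Int.fract_fract_add, Int.fract_fract_sub, sub_add_eq_add_sub, sub_right_comm (l _) p]

theorem arcMem_left_right_iff_mem_Icc (hv : v ∉ X) (ht : t ∈ Ico (0 : ℝ) 1) :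
    arcMem (E.left v) (E.right v) t ↔ Int.fract (t - r (E.partner v)) ∈
      Icc (E.shrink v) (Int.fract (l (E.partner v) - r (E.partner v)) - E.shrink v) := by
  have hg := E.le_fract_l_sub_r (E.partner_mem v hv)
  have hε := E.shrink_pos v
  have hεδ := E.two_mul_shrink_lt v
  have hg1 := Int.fract_lt_one (l (E.partner v) - r (E.partner v))
  rw [E.arcMem_left_right_iff hv ht (r (E.partner v)), sub_self, Int.fract_zero, zero_add,
    Int.fract_eq_self.2 ⟨hε.le, by linarith [E.δ_le_one]⟩,
    Int.fract_eq_self.2 ⟨by linarith, by linarith⟩]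
  unfold arcMem
  constructor
  · rintro (⟨-, h₁, h₂⟩ | ⟨h, -⟩)
    · exact ⟨h₁, h₂⟩
    · linarith
  · exact fun h => Or.inl ⟨by linarith, h.1, h.2⟩

/-- No wrap-around: the endpoints of the arc of `partner v'` stay `δ` away from
`r (partner v)`. -/
theorem arcMem_left_right_iff_of_partner_ne (hv : v ∉ X) (hv' : v' ∉ X)
    (hp : E.partner v ≠ E.partner v') (ht : t ∈ Ico (0 : ℝ) 1) :
    arcMem (E.left v') (E.right v') t ↔
      arcMem (Int.fract (r (E.partner v') - r (E.partner v)) + E.shrink v')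
        (Int.fract (l (E.partner v') - r (E.partner v)) - E.shrink v')
        (Int.fract (t - r (E.partner v))) := by
  set u := E.partner v
  set u' := E.partner v'
  have hu : u ∈ X := E.partner_mem v hv
  have hu' : u' ∈ X := E.partner_mem v' hv'
  have hB := E.separated.fract_sub_le E.normalized.arcEndpoints_subset_Ico
    (right_mem_arcEndpoints hu') (right_mem_arcEndpoints hu)
    fun h => hp (E.normalized.r_injOn hu' hu h).symm
  have hA := E.separated _ (left_mem_arcEndpoints hu') _ (right_mem_arcEndpoints hu)
    (E.normalized.l_ne_r hu' hu)
  have hε := E.shrink_lt_δ v'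
  have hright : Int.fract (Int.fract (r u' - r u) + E.shrink v') =
      Int.fract (r u' - r u) + E.shrink v' :=
    Int.fract_eq_self.2 ⟨by linarith [Int.fract_nonneg (r u' - r u), E.shrink_pos v'],
      by linarith⟩
  have hleft : Int.fract (Int.fract (l u' - r u) - E.shrink v') =
      Int.fract (l u' - r u) - E.shrink v' :=
    Int.fract_eq_self.2
      ⟨by linarith, by linarith [Int.fract_lt_one (l u' - r u), E.shrink_pos v']⟩
  rw [E.arcMem_left_right_iff hv' ht (r u), hright, hleft]

theorem not_arcMem_of_arcMem_left_right (hv : v ∉ X) (ht : t ∈ Ico (0 : ℝ) 1)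
    (h : arcMem (E.left v) (E.right v) t) :
    ¬ arcMem (l (E.partner v)) (r (E.partner v)) t := by
  rw [E.normalized.arcMem_iff (E.partner_mem v hv) ht, not_not]
  obtain ⟨h₁, h₂⟩ := (E.arcMem_left_right_iff_mem_Icc hv ht).1 h
  exact ⟨by linarith [E.shrink_pos v], by linarith [E.shrink_pos v]⟩

theorem arcsMeet_left_right_of_mem_Icc (hv : v ∉ X) {x y σ : ℝ}
    (hσ : σ ∈ Icc (E.shrink v) (Int.fract (l (E.partner v) - r (E.partner v)) - E.shrink v))
    (hxy : ∀ t ∈ Ico (0 : ℝ) 1, Int.fract (t - r (E.partner v)) = σ → arcMem x y t) :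
    arcsMeet (E.left v) (E.right v) x y := by
  have hσ01 : σ ∈ Ico (0 : ℝ) 1 := ⟨by linarith [hσ.1, E.shrink_pos v],
    by linarith [hσ.2, Int.fract_lt_one (l (E.partner v) - r (E.partner v)), E.shrink_pos v]⟩
  have hθ : Int.fract (Int.fract (σ + r (E.partner v)) - r (E.partner v)) = σ := by
    rw [Int.fract_fract_add_sub, Int.fract_eq_self.2 hσ01]
  exact ⟨_, Int.fract_mem_Ico _,
    (E.arcMem_left_right_iff_mem_Icc hv (Int.fract_mem_Ico _)).2 (by rwa [hθ]),
    hxy _ (Int.fract_mem_Ico _) hθ⟩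

theorem arcsMeet_iff_not_arcProperContains (hv : v ∉ X) (hw : w ∈ X) (hwu : w ≠ E.partner v) :
    arcsMeet (E.left v) (E.right v) (l w) (r w) ↔
      ¬ arcProperContains (l (E.partner v)) (r (E.partner v)) (l w) (r w) := by
  set u := E.partner v
  have hu : u ∈ X := E.partner_mem v hv
  have hN := E.normalized
  have hsep := E.separated
  constructor
  · rintro ⟨t, ht, hvt, hwt⟩ ⟨hsub, -⟩
    exact E.not_arcMem_of_arcMem_left_right hv ht hvt (hsub t ht hwt)
  intro hnot
  obtain ⟨t₀, ht₀, hwt₀, hgap⟩ := hN.exists_arcMem_fract_sub_lt hu hnot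
  rw [arcMem_iff_rotate (hN.l_mem_Ico hw) (hN.r_mem_Ico hw) ht₀ (r u)] at hwt₀
  obtain ⟨σ, hσ, hσw⟩ := exists_mem_Icc_arcMem_of_arcMem (E.shrink_pos v).le
    (E.two_mul_shrink_lt v).le (E.le_fract_l_sub_r hu)
    (hsep _ (left_mem_arcEndpoints hw) _ (right_mem_arcEndpoints hu) (hN.l_ne_r hw hu))
    (hsep _ (right_mem_arcEndpoints hw) _ (right_mem_arcEndpoints hu)
      fun h => hwu (hN.r_injOn hw hu h))
    (hsep.le_abs_fract_sub_sub (left_mem_arcEndpoints hw) (left_mem_arcEndpoints hu)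
      (fun h => hwu (hN.l_injOn hw hu h)) _)
    (hsep.le_abs_fract_sub_sub (right_mem_arcEndpoints hw) (left_mem_arcEndpoints hu)
      (fun h => hN.l_ne_r hu hw h.symm) _)
    ⟨Int.fract_nonneg _, hgap⟩ hwt₀
  exact E.arcsMeet_left_right_of_mem_Icc hv hσ fun t ht hθ =>
    (arcMem_iff_rotate (hN.l_mem_Ico hw) (hN.r_mem_Ico hw) ht (r u)).2 (by rwa [hθ])

theorem arcsMeet_iff_not_arcsCover (hv : v ∉ X) (hv' : v' ∉ X)
    (hp : E.partner v ≠ E.partner v') :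
    arcsMeet (E.left v) (E.right v) (E.left v') (E.right v') ↔
      ¬ arcsCover (l (E.partner v)) (r (E.partner v)) (l (E.partner v')) (r (E.partner v')) := by
  set u := E.partner v
  set u' := E.partner v'
  have hu : u ∈ X := E.partner_mem v hv
  have hu' : u' ∈ X := E.partner_mem v' hv'
  have hN := E.normalized
  have hsep := E.separated
  constructor
  · rintro ⟨t, ht, hvt, hv't⟩ hcov
    rcases hcov t ht with h | h
    exacts [E.not_arcMem_of_arcMem_left_right hv ht hvt h,
      E.not_arcMem_of_arcMem_left_right hv' ht hv't h]
  intro hcov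
  unfold arcsCover at hcov
  push Not at hcov
  obtain ⟨t₀, ht₀, hut₀, hu't₀⟩ := hcov
  rw [hN.arcMem_iff hu ht₀, not_not] at hut₀
  rw [arcMem_iff_rotate (hN.l_mem_Ico hu') (hN.r_mem_Ico hu') ht₀ (r u)] at hu't₀
  obtain ⟨σ, hσ, hσ'⟩ := exists_mem_Icc_arcMem_of_not_arcMem (E.two_mul_shrink_lt v).le
    (E.shrink_pos v') (E.two_mul_shrink_lt v').le (E.le_fract_l_sub_r hu)
    (hsep _ (left_mem_arcEndpoints hu') _ (right_mem_arcEndpoints hu) (hN.l_ne_r hu' hu))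
    (Int.fract_nonneg _)
    (hsep.le_abs_fract_sub_sub (right_mem_arcEndpoints hu') (left_mem_arcEndpoints hu)
      (fun h => hN.l_ne_r hu hu' h.symm) _)
    (hsep.le_abs_fract_sub_sub (left_mem_arcEndpoints hu') (right_mem_arcEndpoints hu')
      (hN.l_ne_r hu' hu') _)
    hut₀ hu't₀
  exact E.arcsMeet_left_right_of_mem_Icc hv hσ fun t ht hθ =>
    (E.arcMem_left_right_iff_of_partner_ne hv hv' hp ht).2 (by rwa [hθ])

theorem arcsMeet_of_partner_eq (hv : v ∉ X) (hv' : v' ∉ X) (hp : E.partner v = E.partner v') :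
    arcsMeet (E.left v) (E.right v) (E.left v') (E.right v') := by
  have hg := E.le_fract_l_sub_r (E.partner_mem v hv)
  refine E.arcsMeet_left_right_of_mem_Icc hv (σ := E.δ / 2)
    ⟨by linarith [E.two_mul_shrink_lt v], by linarith [E.two_mul_shrink_lt v]⟩
    fun t ht hθ => (E.arcMem_left_right_iff_mem_Icc hv' ht).2 ?_
  rw [← hp, hθ]
  exact ⟨by linarith [E.two_mul_shrink_lt v'], by linarith [E.two_mul_shrink_lt v']⟩

theorem arcsMeet_of_not_adj (hv : v ∉ X) (hv' : v' ∉ X)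
    (hadj : ¬ G.Adj (E.partner v) (E.partner v')) :
    arcsMeet (E.left v) (E.right v) (E.left v') (E.right v') := by
  set u := E.partner v
  set u' := E.partner v'
  have hu : u ∈ X := E.partner_mem v hv
  have hu' : u' ∈ X := E.partner_mem v' hv'
  have hN := E.normalized
  have hp : u ≠ u' := fun h => hadj (h ▸ G.refl u)
  have hgap : 0 < Int.fract (r u' - r u) ∧ Int.fract (r u' - r u) < Int.fract (l u - r u) := by
    rw [← not_not (a := _ ∧ _), ← hN.arcMem_iff hu (hN.r_mem_Ico hu')]
    exact fun h => hadj ((hN.adj_iff_arcsMeet hu hu').2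
      ⟨r u', hN.r_mem_Ico hu', h, arcMem_right _ _⟩)
  have hBg := E.separated.le_abs_fract_sub_sub (right_mem_arcEndpoints hu')
    (left_mem_arcEndpoints hu) (fun h => hN.l_ne_r hu hu' h.symm) (r u)
  rw [abs_of_neg (by linarith)] at hBg
  have hB := E.separated _ (right_mem_arcEndpoints hu') _ (right_mem_arcEndpoints hu)
    fun h => hp (hN.r_injOn hu hu' h.symm)
  refine E.arcsMeet_left_right_of_mem_Icc hv (σ := Int.fract (r u' - r u) + E.shrink v')
    ⟨by linarith [E.two_mul_shrink_lt v, E.shrink_pos v'],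
      by linarith [E.two_mul_shrink_lt v, E.two_mul_shrink_lt v']⟩
    fun t ht hθ => (E.arcMem_left_right_iff_of_partner_ne hv hv' hp ht).2 ?_
  rw [hθ]
  exact arcMem_left _ _

theorem adj_iff_arcsMeet_of_not_mem_of_mem (hv : v ∉ X) (hw : w ∈ X) :
    G.Adj v w ↔ arcsMeet (E.left v) (E.right v) (E.left w) (E.right w) := by
  rw [E.left_of_mem hw, E.right_of_mem hw, (E.circularPair v hv).adj_iff_not_nbhd_subset]
  by_cases hwu : w = E.partner v
  · subst hwu
    exact iff_of_false (not_not.2 subset_rfl) fun ⟨t, ht, hvt, hut⟩ =>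
      E.not_arcMem_of_arcMem_left_right hv ht hvt hut
  rw [E.arcsMeet_iff_not_arcProperContains hv hw hwu,
    E.normalized.arcProperContains_iff (E.partner_mem v hv) hw (Ne.symm hwu)]

theorem adj_iff_arcsMeet_of_not_mem_of_not_mem (ht : ∀ x y, ¬ G.TrueTwins x y) (hv : v ∉ X)
    (hv' : v' ∉ X) :
    G.Adj v v' ↔ arcsMeet (E.left v) (E.right v) (E.left v') (E.right v') := by
  have hP := E.circularPair v hv
  have hP' := E.circularPair v' hv'
  by_cases hp : E.partner v = E.partner v'
  · exact iff_of_true (hP.adj_of_partner_eq (hp ▸ hP')) (E.arcsMeet_of_partner_eq hv hv' hp)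
  by_cases hadj : G.Adj (E.partner v) (E.partner v')
  · rw [hP.adj_iff_not_twoOverlapEdge hP' hadj, E.arcsMeet_iff_not_arcsCover hv hv' hp,
      E.normalized.arcsCover_iff (E.partner_mem v hv) (E.partner_mem v' hv') hadj hp]
  refine iff_of_true (not_not.1 fun hvv' => ht v (E.partner v') ⟨?_, ?_⟩)
    (E.arcsMeet_of_not_adj hv hv' hadj)
  · exact fun h => hv (h ▸ E.partner_mem v' hv')
  · exact hP.nbhd_eq_of_not_adj hP' hadj hvv'

theorem adj_iff_arcsMeet (ht : ∀ x y, ¬ G.TrueTwins x y) (v w : V) :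
    G.Adj v w ↔ arcsMeet (E.left v) (E.right v) (E.left w) (E.right w) := by
  by_cases hv : v ∈ X <;> by_cases hw : w ∈ X
  · rw [E.left_of_mem hv, E.right_of_mem hv, E.left_of_mem hw, E.right_of_mem hw]
    exact E.normalized.adj_iff_arcsMeet hv hw
  · rw [G.adj_comm, arcsMeet_comm]
    exact E.adj_iff_arcsMeet_of_not_mem_of_mem hw hv
  · exact E.adj_iff_arcsMeet_of_not_mem_of_mem hv hw
  · exact E.adj_iff_arcsMeet_of_not_mem_of_not_mem ht hv hw

/-- Each endpoint is a point of `arcEndpoints X l r` moved by less than `δ / 2`, by `0` on `X`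
and by `± shrink v` off `X`; separation recovers the point and the move. -/
theorem injective_sumElim : Function.Injective (Sum.elim E.left E.right) := by
  classical
  let base : V ⊕ V → ℝ := Sum.elim (fun v => if v ∈ X then l v else r (E.partner v))
    (fun v => if v ∈ X then r v else l (E.partner v))
  let shift : V ⊕ V → ℝ := Sum.elim (fun v => if v ∈ X then 0 else E.shrink v)
    (fun v => if v ∈ X then 0 else -E.shrink v)
  have hfract : ∀ x, Sum.elim E.left E.right x = Int.fract (base x + shift x) := by
    rintro (v | v) <;> by_cases hv : v ∈ X <;>
      simp [base, shift, hv, left, right, sub_eq_add_neg,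
        Int.fract_eq_self.2 (E.normalized.l_mem_Ico _),
        Int.fract_eq_self.2 (E.normalized.r_mem_Ico _)]
  have hbase : ∀ x, base x ∈ arcEndpoints X l r := by
    rintro (v | v) <;> by_cases hv : v ∈ X <;>
      simp only [base, Sum.elim_inl, Sum.elim_inr, hv, if_true, if_false]
    exacts [left_mem_arcEndpoints hv, right_mem_arcEndpoints (E.partner_mem v hv),
      right_mem_arcEndpoints hv, left_mem_arcEndpoints (E.partner_mem v hv)]
  have hshift : ∀ x, |shift x| < E.δ / 2 := by
    rintro (v | v) <;> by_cases hv : v ∈ X <;> simp [shift, hv, abs_of_pos (E.shrink_pos v)] <;>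
      linarith [E.shrink_pos v, E.two_mul_shrink_lt v]
  intro x y hxy
  rw [hfract, hfract] at hxy
  obtain ⟨hb, hs⟩ := E.separated.eq_of_fract_add_eq E.δ_le_one (hbase x) (hbase y) (hshift x)
    (hshift y) hxy
  rcases x with v | v <;> rcases y with w | w <;> by_cases hv : v ∈ X <;> by_cases hw : w ∈ X <;>
    simp [base, shift, hv, hw] at hb hs ⊢
  all_goals first
    | exact E.normalized.l_injOn hv hw hb
    | exact E.normalized.r_injOn hv hw hb
    | exact E.normalized.l_ne_r hv hw hb
    | exact E.normalized.l_ne_r hw hv hb.symm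
    | exact E.shrink_injective hs
    | linarith [E.shrink_pos v, E.shrink_pos w]

theorem isCARep (ht : ∀ x y, ¬ G.TrueTwins x y) : G.IsCARep E.left E.right :=
  ⟨E.left_mem_Ico, E.right_mem_Ico, E.injective_sumElim, E.adj_iff_arcsMeet ht⟩

end ArcExtension

end LoopGraph

theorem circularArc_of_normalizedRepOn_general
    {V : Type} [Fintype V] (G : LoopGraph V)
    (ht : ∀ u v, ¬ G.TrueTwins u v)
    (X : Set V) (l r : V → ℝ)
    (h1 : ∀ v, v ∉ X → ∃ u ∈ X, G.CircularPair v u)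
    (h2 : G.IsNormalizedRepOn X l r) :
    G.IsCircularArc := by
  have hpartner : ∀ v, ∃ u, v ∉ X → u ∈ X ∧ G.CircularPair v u := fun v => by
    by_cases hv : v ∈ X
    · exact ⟨v, fun h => absurd hv h⟩
    · obtain ⟨u, hu, h⟩ := h1 v hv
      exact ⟨u, fun _ => ⟨hu, h⟩⟩
  choose partner hpartner using hpartner
  obtain ⟨δ, hδ, hδ1, hsep⟩ := exists_cyclicallySeparated
    ((toFinite X).image l |>.union ((toFinite X).image r)) h2.arcEndpoints_subset_Ico
  obtain ⟨shrink, hinj, hshrink⟩ := exists_injective_forall_mem_Ioo V (half_pos hδ)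
  let E : G.ArcExtension X l r :=
    { partner, shrink, δ
      normalized := h2
      partner_mem := fun v hv => (hpartner v hv).1
      circularPair := fun v hv => (hpartner v hv).2
      δ_le_one := hδ1
      separated := hsep
      shrink_pos := fun v => (hshrink v).1
      two_mul_shrink_lt := fun v => by linarith [(hshrink v).2]
      shrink_injective := hinj }
  exact ⟨E.left, E.right, E.isCARep ht⟩

/-- If each vertex outside `X` is circularly-paired with a vertex in `X`
and `G[X]` admits a circular-arc representation normalized with respect to `G`, then `G`
is a circular-arc graph. -/
theorem circularArc_of_normalizedRepOn
    {V : Type} [Fintype V] (G : LoopGraph V)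
    (hu : ∀ u, ¬ G.Universal u) (ht : ∀ u v, ¬ G.TrueTwins u v)
    (X : Set V) (l r : V → ℝ)
    (h1 : ∀ v, v ∉ X → ∃ u ∈ X, G.CircularPair v u)
    (h2 : G.IsNormalizedRepOn X l r) :
    G.IsCircularArc :=
  circularArc_of_normalizedRepOn_general G ht X l r h1 h2
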